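/- arXiv:1702.01445 — 4 statements merged into one kernel-verified Lean document; each statement's English description precedes it below -/
import Mathlib

section
/- In the polynomial ring ℚ[Y₁,Y₂,Y₃,Y₄], let g₁ = Y₁³ − Y₂², g₂ = 3Y₁²Y₃ − 2Y₂Y₄, a₁ = 27Y₂Y₃³ − 8Y₄³, a₂ = 9Y₁Y₃² − 4Y₄², a₃ = 2Y₁Y₄ − 3Y₂Y₃. Then Y₂²·a₂ ∈ (g₁,g₂), Y₂·a₃ ∈ (g₁,g₂), and Y₂³·a₁ ∈ (g₁,g₂). -/
open MvPolynomial

/-- In `ℚ[Y₁,Y₂,Y₃,Y₄]`, with `g₁ = Y₁³ − Y₂²`, `g₂ = 3Y₁²Y₃ − 2Y₂Y₄`,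
`a₁ = 27Y₂Y₃³ − 8Y₄³`, `a₂ = 9Y₁Y₃² − 4Y₄²`, `a₃ = 2Y₁Y₄ − 3Y₂Y₃`, one has
`Y₂²·a₂ ∈ (g₁,g₂)`, `Y₂·a₃ ∈ (g₁,g₂)` and `Y₂³·a₁ ∈ (g₁,g₂)`. -/
theorem colon_memberships_cusp_example :
    let Y : Fin 4 → MvPolynomial (Fin 4) ℚ := fun i => X i
    let g₁ := Y 0 ^ 3 - Y 1 ^ 2
    let g₂ := 3 * Y 0 ^ 2 * Y 2 - 2 * Y 1 * Y 3
    let a₁ := 27 * Y 1 * Y 2 ^ 3 - 8 * Y 3 ^ 3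
    let a₂ := 9 * Y 0 * Y 2 ^ 2 - 4 * Y 3 ^ 2
    let a₃ := 2 * Y 0 * Y 3 - 3 * Y 1 * Y 2
    let I := Ideal.span {g₁, g₂}
    Y 1 ^ 2 * a₂ ∈ I ∧ Y 1 * a₃ ∈ I ∧ Y 1 ^ 3 * a₁ ∈ I := by
  intro Y g₁ g₂ a₁ a₂ a₃ I
  refine ⟨?_, ?_, ?_⟩
  · rw [Ideal.mem_span_pair]
    exact ⟨-(9 * Y 0 * Y 2 ^ 2), 3 * Y 0 ^ 2 * Y 2 + 2 * Y 1 * Y 3, by ring⟩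
  · rw [Ideal.mem_span_pair]
    exact ⟨3 * Y 2, -(Y 0), by ring⟩
  · rw [Ideal.mem_span_pair]
    exact ⟨-(27 * Y 2 ^ 3 * (2 * Y 0 ^ 3 - g₁)),
      9 * Y 0 ^ 4 * Y 2 ^ 2 + 6 * Y 0 ^ 2 * Y 1 * Y 2 * Y 3 + 4 * Y 1 ^ 2 * Y 3 ^ 2, by
        simp only [g₁]; ring⟩
end

section
/- In ℚ[Y₁,Y₂,Y₃,Y₄], with g₁ = Y₁³ − Y₂², g₂ = 3Y₁²Y₃ − 2Y₂Y₄, and P₁ the ideal generated by g₁, g₂, 27Y₂Y₃³ − 8Y₄³, 9Y₁Y₃² − 4Y₄², 2Y₁Y₄ − 3Y₂Y₃, one has Y₂³ ∈ ((g₁,g₂) : P₁), i.e. Y₂³·P₁ ⊆ (g₁,g₂). -/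
open MvPolynomial

/-- In `ℚ[Y₁,Y₂,Y₃,Y₄]`, with `g₁ = Y₁³ − Y₂²`, `g₂ = 3Y₁²Y₃ − 2Y₂Y₄` and
`P₁ = (g₁, g₂, 27Y₂Y₃³ − 8Y₄³, 9Y₁Y₃² − 4Y₄², 2Y₁Y₄ − 3Y₂Y₃)`, one has
`Y₂³ ∈ ((g₁,g₂) : P₁)`. -/
theorem cusp_example_colon_ideal :
    let Y : Fin 4 → MvPolynomial (Fin 4) ℚ := fun i => X i
    let g₁ := Y 0 ^ 3 - Y 1 ^ 2
    let g₂ := 3 * Y 0 ^ 2 * Y 2 - 2 * Y 1 * Y 3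
    let a₁ := 27 * Y 1 * Y 2 ^ 3 - 8 * Y 3 ^ 3
    let a₂ := 9 * Y 0 * Y 2 ^ 2 - 4 * Y 3 ^ 2
    let a₃ := 2 * Y 0 * Y 3 - 3 * Y 1 * Y 2
    let I : Ideal (MvPolynomial (Fin 4) ℚ) := Ideal.span {g₁, g₂}
    let P₁ : Ideal (MvPolynomial (Fin 4) ℚ) := Ideal.span {g₁, g₂, a₁, a₂, a₃}
    Y 1 ^ 3 ∈ Submodule.colon I P₁ := by
  intro Y g₁ g₂ a₁ a₂ a₃ I P₁
  rw [Submodule.mem_colon]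
  intro p hp
  have key : ∀ x ∈ ({g₁, g₂, a₁, a₂, a₃} : Set (MvPolynomial (Fin 4) ℚ)),
      Y 1 ^ 3 • x ∈ I := by
    intro x hx
    simp only [Set.mem_insert_iff, Set.mem_singleton_iff] at hx
    have hI : ∀ u v : MvPolynomial (Fin 4) ℚ, u * g₁ + v * g₂ ∈ I := by
      intro u v
      exact Ideal.add_mem _
        (Ideal.mul_mem_left _ _ (Ideal.subset_span (by left; rfl)))
        (Ideal.mul_mem_left _ _ (Ideal.subset_span (by right; rfl)))
    rcases hx with h | h | h | h | h <;> subst h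
    · have := hI (Y 1 ^ 3) 0
      simpa [smul_eq_mul] using this
    · have := hI 0 (Y 1 ^ 3)
      simpa [smul_eq_mul] using this
    · have := hI (-(27 * Y 2 ^ 3 * (2 * Y 1 ^ 2 + g₁)))
        (27 * Y 0 ^ 4 * Y 2 ^ 2 - 9 * Y 0 ^ 2 * Y 2 * g₂ + g₂ ^ 2)
      have e : (-(27 * Y 2 ^ 3 * (2 * Y 1 ^ 2 + g₁))) * g₁ +
          (27 * Y 0 ^ 4 * Y 2 ^ 2 - 9 * Y 0 ^ 2 * Y 2 * g₂ + g₂ ^ 2) * g₂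
          = Y 1 ^ 3 • a₁ := by
        simp only [smul_eq_mul, g₁, g₂, a₁, Y]; ring
      rw [← e]; exact this
    · have := hI (-(9 * Y 0 * Y 1 * Y 2 ^ 2))
        (6 * Y 0 ^ 2 * Y 1 * Y 2 - Y 1 * g₂)
      have e : (-(9 * Y 0 * Y 1 * Y 2 ^ 2)) * g₁ +
          (6 * Y 0 ^ 2 * Y 1 * Y 2 - Y 1 * g₂) * g₂ = Y 1 ^ 3 • a₂ := by
        simp only [smul_eq_mul, g₁, g₂, a₂, Y]; ring
      rw [← e]; exact this
    · have := hI (3 * Y 1 ^ 2 * Y 2) (-(Y 0 * Y 1 ^ 2))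
      have e : (3 * Y 1 ^ 2 * Y 2) * g₁ + (-(Y 0 * Y 1 ^ 2)) * g₂
          = Y 1 ^ 3 • a₃ := by
        simp only [smul_eq_mul, g₁, g₂, a₃, Y]; ring
      rw [← e]; exact this
  refine Submodule.span_induction (fun x hx => key x hx) (by simp) ?_ ?_ hp
  · intro x y _ _ hx hy
    rw [smul_add]; exact Ideal.add_mem _ hx hy
  · intro c x _ hx
    rw [smul_comm]
    exact Submodule.smul_mem _ _ hx
end

section
/- In ℚ[U₁,U₂,V₁,V₂], with h₁ = U₁³ − U₂², h₂ = 3U₁²V₁ − 2U₂V₂, b₁ = 27U₂V₁³ − 8V₂³, b₂ = 9U₁V₁² − 4V₂², b₃ = 2U₁V₂ − 3U₂V₁, one has U₂²·b₂ ∈ (h₁,h₂), U₂·b₃ ∈ (h₁,h₂), and U₂³·b₁ ∈ (h₁,h₂). -/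
open MvPolynomial

/-- In `ℚ[U₁,U₂,V₁,V₂]`, with `h₁ = U₁³ − U₂²`, `h₂ = 3U₁²V₁ − 2U₂V₂`,
`b₁ = 27U₂V₁³ − 8V₂³`, `b₂ = 9U₁V₁² − 4V₂²`, `b₃ = 2U₁V₂ − 3U₂V₁`, one has
`U₂²·b₂ ∈ (h₁,h₂)`, `U₂·b₃ ∈ (h₁,h₂)` and `U₂³·b₁ ∈ (h₁,h₂)`. -/
theorem colon_memberships_cusp_example' :
    let U₁ : MvPolynomial (Fin 4) ℚ := X 0
    let U₂ : MvPolynomial (Fin 4) ℚ := X 1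
    let V₁ : MvPolynomial (Fin 4) ℚ := X 2
    let V₂ : MvPolynomial (Fin 4) ℚ := X 3
    let h₁ := U₁ ^ 3 - U₂ ^ 2
    let h₂ := 3 * U₁ ^ 2 * V₁ - 2 * U₂ * V₂
    let b₁ := 27 * U₂ * V₁ ^ 3 - 8 * V₂ ^ 3
    let b₂ := 9 * U₁ * V₁ ^ 2 - 4 * V₂ ^ 2
    let b₃ := 2 * U₁ * V₂ - 3 * U₂ * V₁
    let I := Ideal.span {h₁, h₂}
    U₂ ^ 2 * b₂ ∈ I ∧ U₂ * b₃ ∈ I ∧ U₂ ^ 3 * b₁ ∈ I := by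
  intro U₁ U₂ V₁ V₂ h₁ h₂ b₁ b₂ b₃ I
  refine ⟨?_, ?_, ?_⟩
  · exact Ideal.mem_span_pair.mpr
      ⟨-(9 * U₁ * V₁ ^ 2), h₂ + 4 * U₂ * V₂, by simp only [h₁, h₂, b₂]; ring⟩
  · exact Ideal.mem_span_pair.mpr
      ⟨3 * V₁, -U₁, by simp only [h₁, h₂, b₃]; ring⟩
  · exact Ideal.mem_span_pair.mpr
      ⟨27 * V₁ ^ 3 * h₁ - 54 * U₁ ^ 3 * V₁ ^ 3, h₂ ^ 2 + 18 * U₁ ^ 2 * U₂ * V₁ * V₂,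
        by simp only [h₁, h₂, b₁]; ring⟩
end

section
/- Let v₁ = Σ_{i≥0} i!·xⁱ ∈ ℚ[[x]]. Then v₁ is not algebraic over ℚ(x); in particular v₁ does not lie in the fraction field of ℚ[x]. -/
/-!
Clear denominators, so that the factorial series `w` would be a root of a nonzero
`Q ∈ ℤ[x][y]`, and reduce modulo a large prime `p`. Since `p ∣ n!` for `n ≥ p`, the series `w`
becomes the polynomial `Σ_{i<p} i! xⁱ`, whose degree is exactly `p - 1` by Wilson's theorem.
Once `p - 1` exceeds the `x`-degrees of the coefficients of `Q`, the leading term of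
`Q mod p` evaluated at that polynomial cannot cancel.
-/

open Polynomial

theorem Polynomial.eval_ne_zero_of_natDegree_coeff_lt {R : Type*} [CommRing R] [IsDomain R]
    {F : R[X]} {Q : R[X][X]} (hQ : Q ≠ 0) (hF : ∀ j, (Q.coeff j).natDegree < F.natDegree) :
    Q.eval F ≠ 0 := by
  have hF0 : F ≠ 0 := ne_zero_of_natDegree_gt (hF 0)
  rw [← divX_mul_X_add Q, eval_add, eval_mul, eval_X, eval_C]
  by_cases hdivX : Q.divX = 0
  · rw [hdivX, eval_zero, zero_mul, zero_add]
    exact fun h0 => hQ (by rw [← divX_mul_X_add Q, hdivX, h0]; simp)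
  have ih := eval_ne_zero_of_natDegree_coeff_lt hdivX fun j => coeff_divX (p := Q) ▸ hF (j + 1)
  intro h0
  have hdeg := congrArg natDegree (eq_neg_of_add_eq_zero_left h0)
  rw [natDegree_neg, natDegree_mul ih hF0] at hdeg
  have := hF 0
  omega
termination_by Q.natDegree
decreasing_by exact natDegree_lt_natDegree hdivX (degree_divX_lt hQ)

theorem Polynomial.exists_prime_ge_map_zmod_ne_zero {Q : ℤ[X][X]} (hQ : Q ≠ 0) (N : ℕ) :
    ∃ p, p.Prime ∧ N ≤ p ∧ Q.map (mapRingHom (Int.castRingHom (ZMod p))) ≠ 0 := by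
  set a := Q.leadingCoeff.leadingCoeff
  have ha : a ≠ 0 := leadingCoeff_ne_zero.mpr (leadingCoeff_ne_zero.mpr hQ)
  obtain ⟨p, hNp, hp⟩ := Nat.exists_infinite_primes (max N (a.natAbs + 1))
  refine ⟨p, hp, le_of_max_le_left hNp, fun h0 => ?_⟩
  have hpa : (p : ℤ) ∣ a := by
    rw [← ZMod.intCast_zmod_eq_zero_iff_dvd]
    simpa [a, coeff_natDegree] using
      congrArg (fun R => (R.coeff Q.natDegree).coeff Q.leadingCoeff.natDegree) h0
  have := Nat.le_of_dvd (Int.natAbs_pos.mpr ha) (Int.natCast_dvd.mp hpa)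
  omega

attribute [local instance] Polynomial.algebra Polynomial.isLocalization in
theorem Transcendental.powerSeriesMap_of_isFractionRing {R K : Type*} [CommRing R] [IsDomain R]
    [Field K] [Algebra R K] [IsFractionRing R K] {w : PowerSeries R}
    (hw : Transcendental R[X] w) : Transcendental K[X] (PowerSeries.map (algebraMap R K) w) := by
  have : Algebra.IsAlgebraic R[X] K[X] := IsLocalization.isAlgebraic _ ((nonZeroDivisors R).map C)
  have : IsScalarTower R[X] K[X] (PowerSeries K) := .of_algebraMap_eq fun q => by
    simp [PowerSeries.algebraMap_apply']
  have : IsScalarTower R[X] (PowerSeries R) (PowerSeries K) := .of_algebraMap_eq fun q => by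
    simp [PowerSeries.algebraMap_apply', PowerSeries.algebraMap_apply'']
  have hinj : Function.Injective (algebraMap (PowerSeries R) (PowerSeries K)) :=
    PowerSeries.map_injective _ (IsFractionRing.injective R K)
  exact fun h => hw ((isAlgebraic_algebraMap_iff hinj).mp (h.restrictScalars R[X]))

noncomputable def factorialSeries (R : Type*) [Semiring R] : PowerSeries R :=
  PowerSeries.mk fun n => (n.factorial : R)

theorem map_factorialSeries {R S : Type*} [Semiring R] [Semiring S] (f : R →+* S) :
    PowerSeries.map f (factorialSeries R) = factorialSeries S := by
  ext n
  simp [factorialSeries]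

theorem factorialSeries_zmod_eq_coe_trunc {p : ℕ} [NeZero p] :
    factorialSeries (ZMod p) =
      (PowerSeries.trunc p (factorialSeries (ZMod p)) : PowerSeries (ZMod p)) := by
  ext n
  rw [Polynomial.coeff_coe, PowerSeries.coeff_trunc]
  split_ifs with hn
  · rfl
  · simp only [factorialSeries, PowerSeries.coeff_mk]
    exact (ZMod.natCast_eq_zero_iff _ _).mpr (Nat.dvd_factorial (NeZero.pos p) (not_lt.mp hn))

theorem natDegree_trunc_factorialSeries_zmod {p : ℕ} [Fact p.Prime] :
    (PowerSeries.trunc p (factorialSeries (ZMod p))).natDegree = p - 1 := by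
  have hp := (Fact.out : p.Prime).one_lt
  apply natDegree_eq_of_le_of_coeff_ne_zero
  · have := PowerSeries.natDegree_trunc_lt (factorialSeries (ZMod p)) (p - 1)
    rw [Nat.sub_add_cancel hp.le] at this
    omega
  · rw [PowerSeries.coeff_trunc, if_pos (by omega), factorialSeries, PowerSeries.coeff_mk,
      ZMod.wilsons_lemma]
    exact neg_ne_zero.mpr one_ne_zero

theorem transcendental_factorialSeries_int : Transcendental ℤ[X] (factorialSeries ℤ) := by
  rintro ⟨Q, hQ, hQw⟩
  obtain ⟨D, hD⟩ : ∃ D, ∀ j, (Q.coeff j).natDegree ≤ D :=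
    ⟨Q.support.sup fun j => (Q.coeff j).natDegree, fun j => by
      by_cases hj : j ∈ Q.support
      · exact Finset.le_sup (f := fun j => (Q.coeff j).natDegree) hj
      · simp [notMem_support_iff.mp hj]⟩
  obtain ⟨p, hp, hDp, hQp⟩ := exists_prime_ge_map_zmod_ne_zero hQ (D + 2)
  have := Fact.mk hp
  set π := Int.castRingHom (ZMod p)
  have hcomm : (algebraMap (ZMod p)[X] (PowerSeries (ZMod p))).comp (mapRingHom π) =
      (PowerSeries.map π).comp (algebraMap ℤ[X] (PowerSeries ℤ)) :=
    RingHom.ext fun q => by simp [PowerSeries.algebraMap_apply']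
  have hcoe (F : (ZMod p)[X]) : (F : PowerSeries (ZMod p)) = algebraMap _ _ F := by
    simp [PowerSeries.algebraMap_apply']
  have hroot := congrArg (PowerSeries.map π) hQw
  rw [map_aeval_eq_aeval_map hcomm, map_factorialSeries, factorialSeries_zmod_eq_coe_trunc,
    map_zero, hcoe, aeval_algebraMap_apply, coe_aeval_eq_eval, ← hcoe, coe_eq_zero_iff] at hroot
  refine eval_ne_zero_of_natDegree_coeff_lt hQp (fun j => ?_) hroot
  rw [natDegree_trunc_factorialSeries_zmod, coeff_map, coe_mapRingHom]
  have := natDegree_map_le (f := π) (p := Q.coeff j)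
  have := hD j
  omega

/-- The power series `v₁ = Σ i!·xⁱ` is transcendental over `ℚ(x)`: it is not algebraic over
the polynomial ring `ℚ[x]` (equivalently over its fraction field `ℚ(x)`); in particular it
is not a ratio of two polynomials. -/
theorem factorial_series_transcendental :
    let v₁ : PowerSeries ℚ := PowerSeries.mk fun i => (Nat.factorial i : ℚ)
    Transcendental (Polynomial ℚ) v₁ ∧
      ∀ p q : Polynomial ℚ, q ≠ 0 →
        algebraMap (Polynomial ℚ) (PowerSeries ℚ) q * v₁ ≠
          algebraMap (Polynomial ℚ) (PowerSeries ℚ) p := by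
  intro v₁
  have hv₁ : Transcendental ℚ[X] v₁ := by
    rw [show v₁ = factorialSeries ℚ from rfl, ← map_factorialSeries (algebraMap ℤ ℚ)]
    exact transcendental_factorialSeries_int.powerSeriesMap_of_isFractionRing (K := ℚ)
  refine ⟨hv₁, fun p q hq hpq => hv₁ (.of_smul (mem_nonZeroDivisors_of_ne_zero hq) ?_)⟩
  rw [Algebra.smul_def, hpq]
  exact isAlgebraic_algebraMap p
end
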